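/- arXiv:2002.09294 — 2 statements merged into one kernel-verified Lean document; each statement's English description precedes it below -/
import Mathlib

section
/- Let X be a standard Borel space, E a countable Borel equivalence relation on X, Γ a Polish group, and ρ : E → Γ a Borel cocycle. If there is an open neighborhood U ⊆ Γ of the identity for which there is a Borel ℕ-coloring of the lacunarity digraph G^ρ_U, then for every compact set K ⊆ Γ there is a Borel ℕ-coloring of G^ρ_K. -/
/-!
Pick an open `V ∋ 1` with `V⁻¹V ⊆ U` and cover `K` by finitely many translates `g⁻¹V`. If
`ρ(x,y)` and `ρ(x,z)` lie in the same translate, then `ρ(y,z) ∈ V⁻¹V ⊆ U`, so `y` and `z` get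
different `U`-colours. Hence the edges of `G^ρ_K` joining points of equal colour lie in finitely
many Borel graphs of partial functions; by Lusin–Souslin such a locally finite graph has a
Borel ℕ-colouring, and pairing it with the `U`-colouring colours `G^ρ_K`.
-/

open MeasureTheory Set ENNReal

namespace CocycleNadkarni

variable {X : Type*} {Γ : Type*}

/-- The `ρ`-size of `Y` relative to the point `z`: `∑_{y ∈ Y} ρ(y, z)`. -/
noncomputable def eSize (ρ : X → X → ℝ) (Y : Set X) (z : X) : ℝ≥0∞ :=
  ∑' y : Y, ENNReal.ofReal (ρ y z)

/-- The `ρ`-size of `Y` relative to the set `Z`, computed at the point `z`. -/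
noncomputable def relSize (ρ : X → X → ℝ) (Y Z : Set X) (z : X) : ℝ≥0∞ :=
  eSize ρ Y z / eSize ρ Z z

/-- Real-valued `ρ`-size (used for finite sets). -/
noncomputable def rSize (ρ : X → X → ℝ) (Y : Set X) (z : X) : ℝ :=
  ∑' y : Y, ρ y z

/-- `∫_C f dμ^ρ_S`, computed at the point `z`. -/
noncomputable def avgOn (ρ : X → X → ℝ) (f : X → ℝ) (S C : Set X) (z : X) : ℝ :=
  (∑' y : ↥(S ∩ C), f y * ρ y z) / rSize ρ S z

/-- countable Borel equivalence relation -/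
def IsCBER [MeasurableSpace X] (E : X → X → Prop) : Prop :=
  Equivalence E ∧ MeasurableSet {p : X × X | E p.1 p.2} ∧ ∀ x : X, {y | E x y}.Countable

/-- Borel cocycle `ρ : E → (0, ∞)` (as a total function whose values off `E` are irrelevant). -/
def IsCocycle [MeasurableSpace X] (E : X → X → Prop) (ρ : X → X → ℝ) : Prop :=
  Measurable (fun p : X × X => ρ p.1 p.2) ∧
    (∀ ⦃x y : X⦄, E x y → 0 < ρ x y) ∧
    ∀ ⦃x y z : X⦄, E x y → E y z → ρ x z = ρ x y * ρ y z

/-- Borel cocycle into a group `Γ`. -/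
def IsGrpCocycle [MeasurableSpace X] [Group Γ] [MeasurableSpace Γ]
    (E : X → X → Prop) (ρ : X → X → Γ) : Prop :=
  Measurable (fun p : X × X => ρ p.1 p.2) ∧
    ∀ ⦃x y z : X⦄, E x y → E y z → ρ x z = ρ x y * ρ y z

/-- finite Borel subequivalence relation of `E` -/
def IsFinSubequiv [MeasurableSpace X] (E F : X → X → Prop) : Prop :=
  Equivalence F ∧ MeasurableSet {p : X × X | F p.1 p.2} ∧
    (∀ ⦃x y : X⦄, F x y → E x y) ∧ ∀ x : X, {y | F x y}.Finite

/-- finite Borel subequivalence relation of `E` restricted to `W` (extended by the diagonal). -/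
def IsFinSubequivOn [MeasurableSpace X] (E : X → X → Prop) (W : Set X)
    (F : X → X → Prop) : Prop :=
  Equivalence F ∧ MeasurableSet {p : X × X | F p.1 p.2} ∧
    (∀ ⦃x y : X⦄, F x y → x = y ∨ (E x y ∧ x ∈ W ∧ y ∈ W)) ∧ ∀ x : X, {y | F x y}.Finite

/-- `ρ`-invariance of a Borel measure. -/
def IsInvariant [MeasurableSpace X] (E : X → X → Prop) (ρ : X → X → ℝ)
    (μ : Measure X) : Prop :=
  ∀ T : X ≃ᵐ X, (∀ x, E (T x) x) → ∀ B : Set X, MeasurableSet B →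
    μ (T '' B) = ∫⁻ x in B, ENNReal.ofReal (ρ (T x) x) ∂μ

/-- invariance w.r.t. the restriction of `ρ` to a set `R` of pairs, via Borel injections
whose graphs are contained in `R⁻¹`. -/
def IsInvariantRel [MeasurableSpace X] (R : Set (X × X)) (ρ : X → X → ℝ)
    (μ : Measure X) : Prop :=
  ∀ (B : Set X) (T : X → X), MeasurableSet B → Measurable T → Set.InjOn T B →
    (∀ x ∈ B, ((T x, x) : X × X) ∈ R) →
    μ (T '' B) = ∫⁻ x in B, ENNReal.ofReal (ρ (T x) x) ∂μ

/-- a Borel ℕ-coloring of the lacunarity digraph `G^ρ_Z`. -/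
def HasColoring [MeasurableSpace X] (E : X → X → Prop) (ρ : X → X → Γ)
    (Z : Set Γ) : Prop :=
  ∃ c : X → ℕ, Measurable c ∧
    ∀ ⦃x y : X⦄, x ≠ y → E x y → ρ x y ∈ Z → c x ≠ c y

/-- smoothness of the cocycle `ρ` restricted to `E` restricted to `W`. -/
def SmoothOn [MeasurableSpace X] (E : X → X → Prop) (ρ : X → X → ℝ)
    (W : Set X) : Prop :=
  ∃ U : Set ℝ, IsOpen U ∧ (1:ℝ) ∈ U ∧ U ⊆ Set.Ioi 0 ∧
    ∃ c : X → ℕ, Measurable c ∧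
      ∀ ⦃x y : X⦄, x ∈ W → y ∈ W → x ≠ y → E x y → ρ x y ∈ U → c x ≠ c y

/-- smoothness of the cocycle `ρ` on `E`. -/
def Smooth [MeasurableSpace X] (E : X → X → Prop) (ρ : X → X → ℝ) : Prop :=
  SmoothOn E ρ Set.univ

/-- `E`-invariance of a set. -/
def EInvariant (E : X → X → Prop) (B : Set X) : Prop :=
  ∀ ⦃x y : X⦄, E x y → x ∈ B → y ∈ B

/-- a compression of `ρ` over the finite subequivalence relation `F` of `E`. -/
def CompressionOver [MeasurableSpace X] (E F : X → X → Prop) (ρ : X → X → ℝ)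
    (φ : X → X) : Prop :=
  (∀ x, E x (φ x)) ∧
  (∀ x : X, relSize ρ (φ ⁻¹' {y | F y x}) {y | F y x} x ≤ 1) ∧
  (∀ x : X, ∃ y, E x y ∧ relSize ρ (φ ⁻¹' {z | F z y}) {z | F z y} y < 1)

/-- a compression of the quotient of `ρ | E | W` by the finite subequivalence relation given
by the setoid `s`, expressed via representatives. -/
def QuotCompressionOn [MeasurableSpace X] (E : X → X → Prop) (ρ : X → X → ℝ)
    (W : Set X) (s : Setoid X) (φ : Quotient s → Quotient s) : Prop :=
  (∀ ⦃x : X⦄, x ∈ W → ∀ y : X, φ (Quotient.mk s x) = Quotient.mk s y → (E x y ∧ y ∈ W)) ∧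
  (∀ ⦃x : X⦄, x ∈ W →
    relSize ρ {y | y ∈ W ∧ φ (Quotient.mk s y) = Quotient.mk s x} {y | s.r y x} x ≤ 1) ∧
  (∀ ⦃x : X⦄, x ∈ W → ∃ y, y ∈ W ∧ E x y ∧
    relSize ρ {z | z ∈ W ∧ φ (Quotient.mk s z) = Quotient.mk s y} {z | s.r z y} y < 1)


/-- `B` has `ρ`-density at least `ε` relative to `W`. -/
def HasDensityAtLeastOn [MeasurableSpace X] (E : X → X → Prop) (ρ : X → X → ℝ)
    (B W : Set X) (ε : ℝ) : Prop :=
  ∃ F : X → X → Prop, IsFinSubequivOn E W F ∧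
    ∀ x ∈ W, ENNReal.ofReal ε ≤ relSize ρ (B ∩ {y | F y x}) {y | F y x} x

/-- `B` has positive `ρ`-density relative to `W`. -/
def HasPosDensityOn [MeasurableSpace X] (E : X → X → Prop) (ρ : X → X → ℝ)
    (B W : Set X) : Prop :=
  ∃ ε : ℝ, 0 < ε ∧ HasDensityAtLeastOn E ρ B W ε

/-- `B` has σ-positive `ρ`-density relative to `W`. -/
def HasSigmaPosDensityOn [MeasurableSpace X] (E : X → X → Prop) (ρ : X → X → ℝ)
    (B W : Set X) : Prop :=
  ∃ A : ℕ → Set X, (∀ n, MeasurableSet (A n)) ∧ (∀ n, A n ⊆ W) ∧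
    (∀ n, ∀ x ∈ A n, ∀ y ∈ W, E x y → y ∈ A n) ∧ W = ⋃ n, A n ∧
    ∀ n, HasPosDensityOn E ρ (B ∩ A n) (A n)

theorem exists_open_nhds_one_inv_mul_mem {G : Type*} [Group G] [TopologicalSpace G]
    [IsTopologicalGroup G] {U : Set G} (hU : U ∈ nhds (1 : G)) :
    ∃ V : Set G, IsOpen V ∧ (1 : G) ∈ V ∧ ∀ a ∈ V, ∀ b ∈ V, a⁻¹ * b ∈ U := by
  obtain ⟨W, hWo, hW1, hWU⟩ := exists_open_nhds_one_split hU
  exact ⟨W ∩ W⁻¹, hWo.inter hWo.inv, ⟨hW1, by simpa using hW1⟩,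
    fun a ha b hb => hWU _ ha.2 _ hb.1⟩

section Coloring

open TopologicalSpace

variable [MeasurableSpace X]

theorem exists_measurable_coloring_of_cover {ι : Type*} [Countable ι] (R : X → X → Prop)
    (A : ι → Set X) (hA : ∀ i, MeasurableSet (A i)) (hcover : ∀ x, ∃ i, x ∈ A i)
    (hind : ∀ i ⦃x y : X⦄, x ∈ A i → y ∈ A i → x ≠ y → ¬ R x y) :
    ∃ d : X → ℕ, Measurable d ∧ ∀ ⦃x y : X⦄, x ≠ y → R x y → d x ≠ d y := by
  classical
  obtain ⟨e, he⟩ := Countable.exists_injective_nat ι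
  have hex : ∀ x, ∃ n, ∃ i, e i = n ∧ x ∈ A i := fun x =>
    let ⟨i, hi⟩ := hcover x; ⟨e i, i, rfl, hi⟩
  refine ⟨fun x => Nat.find (hex x), measurable_find hex fun n => ?_, fun x y hxy hR hd => ?_⟩
  · have : {x | ∃ i, e i = n ∧ x ∈ A i} = ⋃ i ∈ {i | e i = n}, A i := by ext; simp
    rw [this]
    exact MeasurableSet.biUnion (Set.to_countable _) fun i _ => hA i
  · obtain ⟨i, hi, hx⟩ := Nat.find_spec (hex x)
    obtain ⟨j, hj, hy⟩ := Nat.find_spec (hex y)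
    obtain rfl : i = j := he (hi.trans (hd.trans hj.symm))
    exact hind i hx hy hxy hR

variable [StandardBorelSpace X]

theorem measurableSet_setOf_exists_of_injOn {ι : Type*} [Countable ι] {R : X → X → Prop}
    {S : ι → Set (X × X)} (hS : ∀ i, MeasurableSet (S i)) (hinj : ∀ i, InjOn Prod.fst (S i))
    (hRS : ∀ x y, R x y ↔ ∃ i, (x, y) ∈ S i) {T : Set (X × X)} (hT : MeasurableSet T) :
    MeasurableSet {x | ∃ y, R x y ∧ (x, y) ∈ T} := by
  have : {x | ∃ y, R x y ∧ (x, y) ∈ T} = ⋃ i, Prod.fst '' (S i ∩ T) := by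
    ext x
    simp only [hRS, mem_ofPred_eq, mem_iUnion, mem_image, mem_inter_iff, Prod.exists]
    constructor
    · rintro ⟨y, ⟨i, hi⟩, hT⟩
      exact ⟨i, x, y, ⟨hi, hT⟩, rfl⟩
    · rintro ⟨i, x, y, ⟨hi, hT⟩, rfl⟩
      exact ⟨y, ⟨i, hi⟩, hT⟩
  rw [this]
  exact MeasurableSet.iUnion fun i =>
    ((hS i).inter hT).image_of_measurable_injOn measurable_fst ((hinj i).mono inter_subset_left)

theorem exists_measurable_coloring_of_injOn {ι : Type*} [Finite ι] (R : X → X → Prop)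
    (S : ι → Set (X × X)) (hS : ∀ i, MeasurableSet (S i)) (hinj : ∀ i, InjOn Prod.fst (S i))
    (hRS : ∀ x y, R x y ↔ ∃ i, (x, y) ∈ S i) :
    ∃ d : X → ℕ, Measurable d ∧ ∀ ⦃x y : X⦄, x ≠ y → R x y → d x ≠ d y := by
  obtain ⟨f, hf⟩ := exists_measurableEmbedding_real X
  have hfin : ∀ x, {y | R x y}.Finite := fun x => by
    simp only [hRS, ofPred_exists]
    exact finite_iUnion fun i => Subsingleton.finite fun y hy z hz =>
      congrArg Prod.snd (hinj i hy hz rfl)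
  -- A basic open set `b` around `f x` avoiding the `f`-images of the finitely many
  -- `R`-neighbours of `x` singles out an `R`-independent Borel set containing `x`.
  let A (b : countableBasis ℝ) : Set X :=
    f ⁻¹' b \
      {x | ∃ y, R x y ∧ (x, y) ∈ {p : X × X | p.2 ≠ p.1 ∧ f p.2 ∈ (b : Set ℝ)}}
  have : Countable (countableBasis ℝ) := (countable_countableBasis ℝ).to_subtype
  refine exists_measurable_coloring_of_cover R A (fun b => ?_) (fun x => ?_) ?_
  · refine (hf.measurable (isOpen_of_mem_countableBasis b.2).measurableSet).diff
      (measurableSet_setOf_exists_of_injOn hS hinj hRS ?_)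
    exact (measurableSet_eq_fun measurable_snd measurable_fst).compl.inter
      (measurable_snd (hf.measurable (isOpen_of_mem_countableBasis b.2).measurableSet))
  · have hfx : f x ∈ (f '' ({y | R x y} \ {x}))ᶜ := by
      rintro ⟨y, ⟨-, hyx⟩, hfy⟩
      exact hyx (hf.injective hfy)
    obtain ⟨b, hb, hxb, hbF⟩ := (isBasis_countableBasis ℝ).exists_subset_of_mem_open
      hfx ((hfin x).sdiff.image f).isClosed.isOpen_compl
    refine ⟨⟨b, hb⟩, hxb, ?_⟩
    rintro ⟨y, hxy, hyx, hfy⟩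
    exact hbF hfy ⟨y, ⟨hxy, hyx⟩, rfl⟩
  · rintro b x y ⟨-, hx⟩ ⟨hy, -⟩ hxy hR
    exact hx ⟨y, hR, hxy.symm, hy⟩

end Coloring

theorem subsingleton_setOf_mul_mem_of_coloring [Group Γ] {E : X → X → Prop}
    {ρ : X → X → Γ} (hE : Equivalence E)
    (hρ : ∀ ⦃x y z : X⦄, E x y → E y z → ρ x z = ρ x y * ρ y z) {U V : Set Γ}
    (hVU : ∀ a ∈ V, ∀ b ∈ V, a⁻¹ * b ∈ U) {c : X → ℕ}
    (hc : ∀ ⦃x y : X⦄, x ≠ y → E x y → ρ x y ∈ U → c x ≠ c y) (x : X) (g : Γ) (n : ℕ) :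
    {y | E x y ∧ g * ρ x y ∈ V ∧ c y = n}.Subsingleton := by
  rintro y ⟨hxy, hy, rfl⟩ z ⟨hxz, hz, hcz⟩
  by_contra hyz
  have hEyz : E y z := hE.trans (hE.symm hxy) hxz
  have hρyz : ρ y z = (g * ρ x y)⁻¹ * (g * ρ x z) := by
    rw [hρ hxy hEyz]; group
  exact hc hyz hEyz (hρyz ▸ hVU _ hy _ hz) hcz.symm

theorem stmt5_general [MeasurableSpace X] [StandardBorelSpace X]
    [Group Γ] [TopologicalSpace Γ] [IsTopologicalGroup Γ]
    [MeasurableSpace Γ] [BorelSpace Γ]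
    (E : X → X → Prop) (hE : IsCBER E)
    (ρ : X → X → Γ) (hρ : IsGrpCocycle E ρ)
    (h : ∃ U : Set Γ, IsOpen U ∧ (1 : Γ) ∈ U ∧ HasColoring E ρ U) :
    ∀ K : Set Γ, IsCompact K → HasColoring E ρ K := by
  obtain ⟨U, hUo, hU1, c, hc, hcU⟩ := h
  intro K hK
  obtain ⟨V, hVo, hV1, hVU⟩ := exists_open_nhds_one_inv_mul_mem (hUo.mem_nhds hU1)
  obtain ⟨t, ht⟩ := compact_covered_by_mul_left_translates hK
    (show (interior V).Nonempty from ⟨1, hVo.interior_eq.symm ▸ hV1⟩)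
  let S (g : t) : Set (X × X) := {p | E p.1 p.2 ∧ g * ρ p.1 p.2 ∈ V ∧ c p.1 = c p.2}
  have hS (g : t) : MeasurableSet (S g) :=
    hE.2.1.inter ((hρ.1 (hVo.preimage (continuous_const_mul _)).measurableSet).inter
      (measurableSet_eq_fun (hc.comp measurable_fst) (hc.comp measurable_snd)))
  have hinj (g : t) : InjOn Prod.fst (S g) := by
    rintro ⟨x, y⟩ ⟨hxy, hy, hcy⟩ ⟨x', z⟩ ⟨hxz, hz, hcz⟩ (rfl : x = x')
    exact congrArg _ (subsingleton_setOf_mul_mem_of_coloring hE.1 hρ.2 hVU hcU x g (c x)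
      ⟨hxy, hy, hcy.symm⟩ ⟨hxz, hz, hcz.symm⟩)
  obtain ⟨d, hd, hdR⟩ := exists_measurable_coloring_of_injOn
    (fun x y => E x y ∧ ρ x y ∈ ⋃ g ∈ t, (g * ·) ⁻¹' V ∧ c x = c y) S hS hinj
    fun x y => by simp [S]
  refine ⟨fun x => Nat.pair (c x) (d x),
    (measurable_of_countable fun p : ℕ × ℕ => Nat.pair p.1 p.2).comp (hc.prodMk hd), ?_⟩
  intro x y hxy hExy hK heq
  obtain ⟨hcxy, hdxy⟩ := Nat.pair_eq_pair.1 heq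
  exact hdR hxy ⟨hExy, ht hK, hcxy⟩ hdxy

/-- If some open neighborhood `U` of the identity admits a Borel ℕ-coloring of `G^ρ_U`,
then every compact `K ⊆ Γ` admits a Borel ℕ-coloring of `G^ρ_K`. -/
theorem stmt5 [MeasurableSpace X] [StandardBorelSpace X]
    [Group Γ] [TopologicalSpace Γ] [IsTopologicalGroup Γ] [PolishSpace Γ]
    [MeasurableSpace Γ] [BorelSpace Γ]
    (E : X → X → Prop) (hE : IsCBER E)
    (ρ : X → X → Γ) (hρ : IsGrpCocycle E ρ)
    (h : ∃ U : Set Γ, IsOpen U ∧ (1 : Γ) ∈ U ∧ HasColoring E ρ U) :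
    ∀ K : Set Γ, IsCompact K → HasColoring E ρ K :=
  stmt5_general E hE ρ hρ h

end CocycleNadkarni
end

section
/- Let X be a standard Borel space, E a countable Borel equivalence relation on X, ρ : E → (0,∞) a Borel cocycle, and F a finite Borel subequivalence relation of E. Then ρ is smooth if and only if the quotient cocycle ρ/F is smooth. -/
/-!
Enumerate every `F`-class in increasing order along a Borel embedding `e : X → ℝ`. The
enumeration is Borel: on a Borel set where classes have at most `m` elements, the classes with
exactly `m` elements are those admitting a sorted `m`-tuple, which is then unique, so by
Lusin–Souslin they form a Borel set and the tuple depends Borel-measurably on the point; by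
Novikov's separation theorem `X` is covered by countably many Borel sets of bounded class size.
The enumeration gives an `F`-invariant Borel selector `σ`, a Borel labelling injective on
`F`-classes, and Borel class sizes.

By the cocycle identity, `(ρ / F)([x], [y]) = |[x]|^{σ x} / |[y]|^{σ y} · ρ(σ x, σ y)`. If
the class sizes `|[x]|^{σ x}` and `|[y]|^{σ y}` lie in the same interval `[q^n, q^{n+1})`, their
ratio is close to `1`, so `(ρ / F)([x], [y])` is close to `1` iff `ρ(σ x, σ y)` is. Hence a
colouring `c` of `G^ρ_U` yields the colouring `[x] ↦ (c (σ x), ⌊log_q |[x]|^{σ x}⌋)` of the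
quotient, and conversely a colouring `c̄` of the quotient yields
`x ↦ (c̄ [x], label x, ⌊log_q |[x]|^x⌋)`.
-/

open MeasureTheory Set ENNReal

namespace CocycleNadkarni

variable {X : Type*} {Γ : Type*}

section Separation

open Function Topology

variable {α : Type*}

def MeasurablySeparableFamily [MeasurableSpace α] (s : ℕ → Set α) : Prop :=
  ∃ B : ℕ → Set α, (∀ n, s n ⊆ B n) ∧ (∀ n, MeasurableSet (B n)) ∧ ⋂ n, B n = ∅

theorem MeasurablySeparableFamily.of_update [MeasurableSpace α] {s : ℕ → Set α} {j : ℕ}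
    {t : ℕ → Set α} (hs : s j ⊆ ⋃ i, t i)
    (h : ∀ i, MeasurablySeparableFamily (update s j (t i))) : MeasurablySeparableFamily s := by
  choose B hsB hB hBempty using h
  refine ⟨update (fun n => ⋂ i, B i n) j (⋃ i, B i j), fun n => ?_, fun n => ?_, ?_⟩
  · rcases eq_or_ne n j with rfl | hn
    · simpa using hs.trans (iUnion_mono fun i => by simpa using hsB i n)
    · simpa [hn] using fun i => by simpa [hn] using hsB i n
  · rcases eq_or_ne n j with rfl | hn
    · simpa using MeasurableSet.iUnion fun i => hB i n
    · simpa [hn] using MeasurableSet.iInter fun i => hB i n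
  · refine eq_empty_of_forall_notMem fun x hx => ?_
    rw [mem_iInter] at hx
    obtain ⟨i, hi⟩ := mem_iUnion.1 (by simpa using hx j)
    have : x ∈ ⋂ n, B i n := mem_iInter.2 fun n => by
      rcases eq_or_ne n j with rfl | hn
      · exact hi
      · simpa [hn] using mem_iInter.1 (by simpa [hn] using hx n) i
    simp [hBempty i] at this

theorem MeasurablySeparableFamily.of_disjoint [MeasurableSpace α] {s : ℕ → Set α} {a b : ℕ}
    (hab : a ≠ b) {u v : Set α} (hu : MeasurableSet u) (hv : MeasurableSet v)
    (huv : Disjoint u v) (hsu : s a ⊆ u) (hsv : s b ⊆ v) : MeasurablySeparableFamily s := by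
  refine ⟨update (update (fun _ => univ) a u) b v, fun n => ?_, fun n => ?_, ?_⟩
  · rcases eq_or_ne n b with rfl | hnb
    · simpa using hsv
    · rcases eq_or_ne n a with rfl | hna <;> simp [*]
  · rcases eq_or_ne n b with rfl | hnb
    · simpa using hv
    · rcases eq_or_ne n a with rfl | hna <;> simp [*]
  · refine subset_empty_iff.1 fun x hx => huv.le_bot ⟨?_, ?_⟩
    · simpa [hab] using mem_iInter.1 hx a
    · simpa using mem_iInter.1 hx b

def pairSection (j : ℕ) (z : ℕ → ℕ) : ℕ → ℕ := fun i => z (Nat.pair j i)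

theorem continuous_pairSection (j : ℕ) : Continuous (pairSection j) :=
  continuous_pi fun _ => continuous_apply _

theorem pairSection_surjective (j : ℕ) : Surjective (pairSection j) :=
  fun w => ⟨fun k => w (Nat.unpair k).2, funext fun i => by simp [pairSection]⟩

theorem image_pairSection_cylinder_update {j n : ℕ} (hj : (Nat.unpair n).1 ≠ j)
    (z : ℕ → ℕ) (d : ℕ) :
    pairSection j '' PiNat.cylinder (update z n d) (n + 1) =
      pairSection j '' PiNat.cylinder z n := by
  refine Subset.antisymm (image_mono fun y hy i hi => ?_) ?_
  · simpa [hi.ne] using hy i (Nat.lt_succ_of_lt hi)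
  · rintro _ ⟨y, hy, rfl⟩
    refine ⟨update y n d, fun i hi => ?_, funext fun i => ?_⟩
    · rcases Nat.lt_succ_iff_lt_or_eq.1 hi with hi | rfl
      · simp [hi.ne, hy i hi]
      · simp
    · have : Nat.pair j i ≠ n := by rintro rfl; simp at hj
      simp [pairSection, this]

theorem exists_not_measurablySeparableFamily_cylinder_update [MeasurableSpace α]
    (f : ℕ → (ℕ → ℕ) → α) {z : ℕ → ℕ} {n : ℕ}
    (h : ¬MeasurablySeparableFamily fun j => f j ∘ pairSection j '' PiNat.cylinder z n) :
    ∃ d, ¬MeasurablySeparableFamily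
      fun j => f j ∘ pairSection j '' PiNat.cylinder (update z n d) (n + 1) := by
  by_contra! hall
  refine h (MeasurablySeparableFamily.of_update (j := (Nat.unpair n).1)
    (t := fun d => f (Nat.unpair n).1 ∘ pairSection (Nat.unpair n).1 ''
      PiNat.cylinder (update z n d) (n + 1)) ?_ fun d => ?_)
  · rw [← image_iUnion]
    exact image_mono (PiNat.iUnion_cylinder_update z n).superset
  · convert hall d using 1
    funext j
    rcases eq_or_ne j (Nat.unpair n).1 with rfl | hj
    · simp
    · rw [update_of_ne hj, image_comp, image_comp, image_pairSection_cylinder_update hj.symm]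

theorem exists_forall_cylinder {P : Set (ℕ → ℕ) → Prop} (h0 : P univ)
    (hstep : ∀ z n, P (PiNat.cylinder z n) → ∃ d, P (PiNat.cylinder (update z n d) (n + 1))) :
    ∃ x, ∀ n, P (PiNat.cylinder x n) := by
  choose! D hD using hstep
  let zs : ℕ → ℕ → ℕ := fun n => Nat.rec (fun _ => 0) (fun n z => update z n (D z n)) n
  have hzs : ∀ n, P (PiNat.cylinder (zs n) n) := by
    intro n
    induction n with
    | zero => simpa using h0
    | succ n ih => exact hD _ _ ih
  have hstable : ∀ n, ∀ i < n, zs n i = zs (i + 1) i := by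
    intro n
    induction n with
    | zero => simp
    | succ n ih =>
      intro i hi
      rcases Nat.lt_succ_iff_lt_or_eq.1 hi with hi | rfl
      · exact (update_of_ne hi.ne _ _).trans (ih i hi)
      · rfl
  refine ⟨fun i => zs (i + 1) i, fun n => ?_⟩
  rw [PiNat.mem_cylinder_iff_eq.1 fun i hi => (hstable n i hi).symm]
  exact hzs n

theorem exists_cylinder_subset {x : ℕ → ℕ} {s : Set (ℕ → ℕ)} (hs : s ∈ 𝓝 x) :
    ∃ n, PiNat.cylinder x n ⊆ s := by
  obtain ⟨_, ⟨y, n, rfl⟩, hx, hsub⟩ :=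
    (PiNat.isTopologicalBasis_cylinders fun _ => ℕ).mem_nhds_iff.1 hs
  exact ⟨n, (PiNat.mem_cylinder_iff_eq.1 hx) ▸ hsub⟩

/-- **Novikov's separation theorem.** -/
theorem measurablySeparableFamily_of_iInter_eq_empty [TopologicalSpace α] [T2Space α]
    [MeasurableSpace α] [OpensMeasurableSpace α] {A : ℕ → Set α}
    (hA : ∀ n, AnalyticSet (A n)) (hempty : ⋂ n, A n = ∅) : MeasurablySeparableFamily A := by
  by_cases hne : ∃ n, A n = ∅
  · obtain ⟨n₀, hn₀⟩ := hne
    refine ⟨update (fun _ => univ) n₀ ∅, fun n => ?_, fun n => ?_, ?_⟩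
    · rcases eq_or_ne n n₀ with rfl | hn <;> simp [*]
    · rcases eq_or_ne n n₀ with rfl | hn <;> simp [*]
    · exact subset_empty_iff.1 ((iInter_subset _ n₀).trans (by simp))
  simp only [not_exists] at hne
  choose f hf hfA using fun n => by simpa [AnalyticSet, hne n] using hA n
  -- Read through `Nat.pair`, one more digit of a cylinder refines a single member of the family,
  -- so Lusin's cylinder-refinement argument runs on all the `A j` simultaneously.
  let g : ℕ → (ℕ → ℕ) → α := fun j => f j ∘ pairSection j
  have hg : ∀ j, Continuous (g j) := fun j => (hf j).comp (continuous_pairSection j)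
  have hgA : ∀ j, range (g j) = A j := fun j => by
    rw [range_comp, (pairSection_surjective j).range_eq, image_univ, hfA]
  by_contra hsep
  obtain ⟨x, hx⟩ :=
    exists_forall_cylinder (P := fun s => ¬MeasurablySeparableFamily fun j => g j '' s)
      (by simpa [image_univ, hgA] using hsep)
    fun z n hz => exists_not_measurablySeparableFamily_cylinder_update f hz
  have hconst : ∀ a b, g a x = g b x := by
    intro a b
    by_contra hab
    obtain ⟨u, v, hu, hv, hau, hbv, huv⟩ := t2_separation hab
    obtain ⟨n, hn⟩ := exists_cylinder_subset (Filter.inter_mem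
      ((hg a).continuousAt.preimage_mem_nhds (hu.mem_nhds hau))
      ((hg b).continuousAt.preimage_mem_nhds (hv.mem_nhds hbv)))
    exact hx n (.of_disjoint (by rintro rfl; exact hab rfl) hu.measurableSet hv.measurableSet huv
      (image_subset_iff.2 fun y hy => (hn hy).1) (image_subset_iff.2 fun y hy => (hn hy).2))
  refine (eq_empty_iff_forall_notMem.1 hempty) (g 0 x) (mem_iInter.2 fun n => ?_)
  exact hgA n ▸ hconst n 0 ▸ mem_range_self x

end Separation

section SortedEnum

open Function

/-- The tail condition `v i = v 0` for `k ≤ i` makes `v` determined by its first `k` values. -/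
def IsSortedEnum (F : X → X → Prop) (e : X → ℝ) (k : ℕ) (v : ℕ → X) (x : X) : Prop :=
  (∀ i < k, F (v i) x) ∧ StrictMonoOn (e ∘ v) (Iio k) ∧ ∀ i, k ≤ i → v i = v 0

variable {F : X → X → Prop} {e : X → ℝ} {k : ℕ} {v w : ℕ → X} {x : X}

theorem IsSortedEnum.image_subset (h : IsSortedEnum F e k v x) : v '' Iio k ⊆ {y | F y x} := by
  rintro _ ⟨i, hi, rfl⟩
  exact h.1 i hi

theorem IsSortedEnum.ncard_image (h : IsSortedEnum F e k v x) : (v '' Iio k).ncard = k := by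
  rw [h.2.1.injOn.of_comp.ncard_image, ← Finset.coe_range, ncard_coe_finset, Finset.card_range]

theorem IsSortedEnum.le_ncard (hfin : {y | F y x}.Finite) (h : IsSortedEnum F e k v x) :
    k ≤ {y | F y x}.ncard :=
  h.ncard_image ▸ ncard_le_ncard h.image_subset hfin

theorem IsSortedEnum.image_eq (hfin : {y | F y x}.Finite) (h : IsSortedEnum F e k v x)
    (hk : {y | F y x}.ncard ≤ k) : v '' Iio k = {y | F y x} :=
  eq_of_subset_of_ncard_le h.image_subset (by rwa [h.ncard_image]) hfin

theorem IsSortedEnum.eq (hF : Equivalence F) (hfin : {y | F y x}.Finite) (he : Injective e)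
    (hv : IsSortedEnum F e k v x) (hw : IsSortedEnum F e k w x) (hk : {y | F y x}.ncard ≤ k) :
    v = w := by
  have hmono : ∀ {u : ℕ → X}, IsSortedEnum F e k u x →
      StrictMono fun i : Fin k => e (u i) := fun hu i j hij => hu.2.1 i.2 j.2 hij
  have hrange : ∀ {u : ℕ → X}, IsSortedEnum F e k u x →
      range (fun i : Fin k => e (u i)) = e '' {y | F y x} := fun hu => by
    rw [← hu.image_eq hfin hk, image_image, ← Fin.range_val, ← range_comp]
    rfl
  have hlow : ∀ i < k, v i = w i := fun i hi =>
    he (congrFun ((hmono hv).range_inj (hmono hw) |>.1 ((hrange hv).trans (hrange hw).symm))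
      ⟨i, hi⟩)
  have hpos : 0 < k := ((ncard_pos hfin).2 ⟨x, hF.refl x⟩).trans_le hk
  funext i
  rcases lt_or_ge i k with hi | hi
  · exact hlow i hi
  · rw [hv.2.2 i hi, hw.2.2 i hi, hlow 0 hpos]

theorem exists_isSortedEnum (hF : Equivalence F) (hfin : {y | F y x}.Finite) (he : Injective e)
    (hk : k ≤ {y | F y x}.ncard) : ∃ v, IsSortedEnum F e k v x := by
  have : Nonempty X := ⟨x⟩
  set s : Finset ℝ := hfin.toFinset.image e
  have hcard : s.card = {y | F y x}.ncard := by
    rw [Finset.card_image_of_injective _ he, ncard_eq_toFinset_card _ hfin]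
  have hpos : 0 < s.card := hcard ▸ (ncard_pos hfin).2 ⟨x, hF.refl x⟩
  set φ := s.orderEmbOfFin rfl
  have hφ : ∀ j, F (invFun e (φ j)) x ∧ e (invFun e (φ j)) = φ j := fun j => by
    obtain ⟨y, hy, hyj⟩ := Finset.mem_image.1 (s.orderEmbOfFin_mem rfl j)
    rw [← hyj, leftInverse_invFun he y]
    exact ⟨by simpa using hy, rfl⟩
  let idx : ℕ → Fin s.card := fun i =>
    if hi : i < k then ⟨i, hi.trans_le (hcard ▸ hk)⟩ else ⟨0, hpos⟩
  have hidx : ∀ i (hi : i < k), idx i = ⟨i, hi.trans_le (hcard ▸ hk)⟩ :=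
    fun i hi => dif_pos hi
  refine ⟨fun i => invFun e (φ (idx i)), fun i _ => (hφ _).1, fun i hi j hj hij => ?_,
    fun i hi => congrArg _ (congrArg _ (Fin.ext (by simp [idx, not_lt.2 hi]; split_ifs <;> rfl)))⟩
  simp only [comp_apply, (hφ _).2, hidx i hi, hidx j hj]
  exact φ.strictMono hij

theorem measurableSet_isSortedEnum [MeasurableSpace X] [MeasurableEq X]
    (hFm : MeasurableSet {p : X × X | F p.1 p.2}) (he : Measurable e) (k : ℕ) :
    MeasurableSet {p : (ℕ → X) × X | IsSortedEnum F e k p.1 p.2} := by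
  have hcoord : ∀ i, Measurable fun p : (ℕ → X) × X => p.1 i := fun i => by fun_prop
  have hrel : ∀ i, Measurable fun p : (ℕ → X) × X => F (p.1 i) p.2 := fun i =>
    measurableSet_setOfPred.1 (hFm.preimage ((hcoord i).prodMk measurable_snd))
  have hlt : ∀ i j, Measurable fun p : (ℕ → X) × X => e (p.1 i) < e (p.1 j) := fun i j =>
    measurableSet_setOfPred.1 (measurableSet_lt (he.comp (hcoord i)) (he.comp (hcoord j)))
  have heq : ∀ i, Measurable fun p : (ℕ → X) × X => p.1 i = p.1 0 := fun i =>
    measurableSet_setOfPred.1 (measurableSet_eq_fun (hcoord i) (hcoord 0))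
  refine measurableSet_setOfPred.2 (.and ?_ (.and ?_ ?_))
  · exact .forall fun i => .imp measurable_const (hrel i)
  · exact .forall fun i => .imp measurable_const <| .forall fun j =>
      .imp measurable_const <| .imp measurable_const (hlt i j)
  · exact .forall fun i => .imp measurable_const (heq i)

end SortedEnum

theorem exists_measurable_of_existsUnique {Y : Type*} [MeasurableSpace Y] [StandardBorelSpace Y]
    [MeasurableSpace X] [StandardBorelSpace X] {D : Set (Y × X)} (hD : MeasurableSet D)
    (h : ∀ x, ∃! y, (y, x) ∈ D) :
    ∃ f : X → Y, Measurable f ∧ ∀ x, (f x, x) ∈ D := by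
  choose f hf huniq using h
  refine ⟨f, fun T hT => ?_, hf⟩
  have hpre : f ⁻¹' T = Prod.snd '' (D ∩ Prod.fst ⁻¹' T) := by
    ext x
    refine ⟨fun hx => ⟨(f x, x), ⟨hf x, hx⟩, rfl⟩, ?_⟩
    rintro ⟨⟨y, x⟩, ⟨hyx, hy⟩, rfl⟩
    rwa [mem_preimage, ← huniq x y hyx]
  rw [hpre]
  refine (hD.inter (measurable_fst hT)).image_of_measurable_injOn measurable_snd ?_
  rintro ⟨y, x⟩ ⟨hyx, -⟩ ⟨y', x'⟩ ⟨hyx', -⟩ (rfl : x = x')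
  rw [huniq x y hyx, huniq x y' hyx']

theorem tsum_image_Iio_eq_sum {β : Type*} [AddCommMonoid β] [TopologicalSpace β] {v : ℕ → X}
    {n : ℕ} {s : Set X} (hv : InjOn v (Iio n)) (hs : v '' Iio n = s) (f : X → β) :
    ∑' y : s, f y = ∑ i ∈ Finset.range n, f (v i) := by
  subst hs
  rw [tsum_image f hv, ← Finset.coe_range]
  exact Finset.tsum_subtype (Finset.range n) (f ∘ v)

theorem setOf_rel_eq_of_rel {F : X → X → Prop} (hF : Equivalence F) {x y : X} (hxy : F x y) :
    {z | F z x} = {z | F z y} :=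
  ext fun _ => ⟨fun h => hF.trans h hxy, fun h => hF.trans h (hF.symm hxy)⟩

section FiniteEquivalence

open Function

variable [MeasurableSpace X] [StandardBorelSpace X] {F : X → X → Prop} {e : X → ℝ}

theorem measurableSet_inter_ncard_eq (hF : Equivalence F)
    (hFm : MeasurableSet {p : X × X | F p.1 p.2}) (hfin : ∀ x, {y | F y x}.Finite)
    (he : MeasurableEmbedding e) {W : Set X} (hW : MeasurableSet W) {m : ℕ}
    (hWm : ∀ x ∈ W, {y | F y x}.ncard ≤ m) :
    MeasurableSet (W ∩ {x | {y | F y x}.ncard = m}) := by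
  have hW_eq : W ∩ {x | {y | F y x}.ncard = m} =
      Prod.snd '' ({p : (ℕ → X) × X | IsSortedEnum F e m p.1 p.2} ∩ Prod.snd ⁻¹' W) := by
    ext x
    constructor
    · rintro ⟨hxW, hxm⟩
      obtain ⟨v, hv⟩ := exists_isSortedEnum hF (hfin x) he.injective hxm.ge
      exact ⟨(v, x), ⟨hv, hxW⟩, rfl⟩
    · rintro ⟨⟨v, x⟩, ⟨hv, hxW⟩, rfl⟩
      exact ⟨hxW, (hWm x hxW).antisymm (hv.le_ncard (hfin x))⟩
  -- Lusin–Souslin: a class with exactly `m` elements has a unique sorted `m`-enumeration.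
  rw [hW_eq]
  refine ((measurableSet_isSortedEnum hFm he.measurable m).inter
    (measurable_snd hW)).image_of_measurable_injOn measurable_snd ?_
  rintro ⟨v, x⟩ ⟨hv, hxW⟩ ⟨w, x'⟩ ⟨hw, -⟩ (rfl : x = x')
  rw [IsSortedEnum.eq (v := v) hF (hfin x) he.injective hv hw (hWm x hxW)]

theorem measurableSet_inter_ncard_eq_of_lt (hF : Equivalence F)
    (hFm : MeasurableSet {p : X × X | F p.1 p.2}) (hfin : ∀ x, {y | F y x}.Finite)
    (he : MeasurableEmbedding e) (m : ℕ) {W : Set X} (hW : MeasurableSet W)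
    (hWm : ∀ x ∈ W, {y | F y x}.ncard < m) (k : ℕ) :
    MeasurableSet (W ∩ {x | {y | F y x}.ncard = k}) := by
  induction m generalizing W with
  | zero =>
    rw [eq_empty_of_forall_notMem fun x hx => Nat.not_lt_zero _ (hWm x hx), empty_inter]
    exact .empty
  | succ m ih =>
    have htop := measurableSet_inter_ncard_eq hF hFm hfin he hW fun x hx =>
      Nat.le_of_lt_succ (hWm x hx)
    rcases eq_or_ne k m with rfl | hk
    · exact htop
    have hW_eq : W ∩ {x | {y | F y x}.ncard = k} =
        (W \ (W ∩ {x | {y | F y x}.ncard = m})) ∩ {x | {y | F y x}.ncard = k} := by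
      ext x
      simp only [mem_inter_iff, mem_sdiff, mem_ofPred_eq]
      constructor
      · rintro ⟨hxW, rfl⟩
        exact ⟨⟨hxW, fun h => hk h.2⟩, rfl⟩
      · exact fun h => ⟨h.1.1, h.2⟩
    rw [hW_eq]
    exact ih (hW.diff htop) fun x hx => lt_of_le_of_ne (Nat.le_of_lt_succ (hWm x hx.1))
      fun h => hx.2 ⟨hx.1, h⟩

theorem exists_measurableSet_cover_ncard_lt (hF : Equivalence F)
    (hFm : MeasurableSet {p : X × X | F p.1 p.2}) (hfin : ∀ x, {y | F y x}.Finite)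
    (he : MeasurableEmbedding e) :
    ∃ W : ℕ → Set X, (∀ m, MeasurableSet (W m)) ∧
      (∀ m, ∀ x ∈ W m, {y | F y x}.ncard < m) ∧ ∀ x, ∃ m, x ∈ W m := by
  let := upgradeStandardBorel X
  have hA : ∀ m, AnalyticSet (Prod.snd '' {p : (ℕ → X) × X | IsSortedEnum F e m p.1 p.2}) :=
    fun m => (measurableSet_isSortedEnum hFm he.measurable m).analyticSet_image measurable_snd
  obtain ⟨B, hAB, hB, hBempty⟩ := measurablySeparableFamily_of_iInter_eq_empty hA <| by
    refine eq_empty_of_forall_notMem fun x hx => ?_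
    obtain ⟨⟨v, x⟩, hv, rfl⟩ := mem_iInter.1 hx ({y | F y x}.ncard + 1)
    exact Nat.not_succ_le_self _ (hv.le_ncard (hfin x))
  refine ⟨fun m => (B m)ᶜ, fun m => (hB m).compl, fun m x hx => ?_, fun x => ?_⟩
  · by_contra! h
    obtain ⟨v, hv⟩ := exists_isSortedEnum hF (hfin x) he.injective h
    exact hx (hAB m ⟨(v, x), hv, rfl⟩)
  · by_contra! h
    simpa [hBempty] using mem_iInter.2 fun m => not_not.1 (h m)

theorem measurable_ncard_setOf_rel (hF : Equivalence F)
    (hFm : MeasurableSet {p : X × X | F p.1 p.2}) (hfin : ∀ x, {y | F y x}.Finite) :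
    Measurable fun x => {y | F y x}.ncard := by
  obtain ⟨e, he⟩ := exists_measurableEmbedding_real X
  obtain ⟨W, hW, hWlt, hcover⟩ := exists_measurableSet_cover_ncard_lt hF hFm hfin he
  refine measurable_to_countable' fun k => ?_
  have hpre : (fun x => {y | F y x}.ncard) ⁻¹' {k} =
      ⋃ m, W m ∩ {x | {y | F y x}.ncard = k} := by
    ext x
    simp only [mem_preimage, mem_singleton_iff, mem_iUnion, mem_inter_iff, mem_ofPred_eq]
    exact ⟨fun hx => (hcover x).imp fun m hm => ⟨hm, hx⟩, fun ⟨_, _, hx⟩ => hx⟩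
  rw [hpre]
  exact .iUnion fun m => measurableSet_inter_ncard_eq_of_lt hF hFm hfin he m (hW m) (hWlt m) k

theorem exists_measurable_classEnum (hF : Equivalence F)
    (hFm : MeasurableSet {p : X × X | F p.1 p.2}) (hfin : ∀ x, {y | F y x}.Finite) :
    ∃ enum : X → ℕ → X, Measurable enum ∧
      (∀ x, InjOn (enum x) (Iio {y | F y x}.ncard) ∧
        enum x '' Iio {y | F y x}.ncard = {y | F y x}) ∧
      ∀ x y, F x y → enum x = enum y := by
  obtain ⟨e, he⟩ := exists_measurableEmbedding_real X
  have hN := measurable_ncard_setOf_rel hF hFm hfin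
  have hD :
      MeasurableSet {p : (ℕ → X) × X | IsSortedEnum F e {y | F y p.2}.ncard p.1 p.2} := by
    have hD_eq : {p : (ℕ → X) × X | IsSortedEnum F e {y | F y p.2}.ncard p.1 p.2} =
        ⋃ k, Prod.snd ⁻¹' ((fun x => {y | F y x}.ncard) ⁻¹' {k}) ∩
          {p | IsSortedEnum F e k p.1 p.2} := by
      ext p
      simp
    rw [hD_eq]
    exact .iUnion fun k => (measurable_snd (hN (measurableSet_singleton k))).inter
      (measurableSet_isSortedEnum hFm he.measurable k)
  obtain ⟨enum, henum, hspec⟩ := exists_measurable_of_existsUnique hD fun x => by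
    obtain ⟨v, hv⟩ := exists_isSortedEnum hF (hfin x) he.injective le_rfl
    exact ⟨v, hv, fun w hw => hw.eq hF (hfin x) he.injective hv le_rfl⟩
  refine ⟨enum, henum,
    fun x => ⟨(hspec x).2.1.injOn.of_comp, (hspec x).image_eq (hfin x) le_rfl⟩,
    fun x y hxy => ?_⟩
  have hy : IsSortedEnum F e {z | F z x}.ncard (enum y) x := by
    obtain ⟨h1, h2, h3⟩ := hspec y
    rw [setOf_rel_eq_of_rel hF hxy]
    exact ⟨fun i hi => hF.trans (h1 i hi) (hF.symm hxy), h2, h3⟩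
  exact (hspec x).eq hF (hfin x) he.injective hy le_rfl

theorem measurable_tsum_setOf_rel (hF : Equivalence F)
    (hFm : MeasurableSet {p : X × X | F p.1 p.2}) (hfin : ∀ x, {y | F y x}.Finite)
    {g : X → X → ℝ} (hg : Measurable (uncurry g)) :
    Measurable fun x => ∑' y : {y | F y x}, g x y := by
  obtain ⟨enum, henum, hspec, -⟩ := exists_measurable_classEnum hF hFm hfin
  have hsum : Measurable fun p : X × ℕ => ∑ i ∈ Finset.range p.2, g p.1 (enum p.1 i) :=
    measurable_from_prod_countable_left fun k => Finset.measurable_sum (Finset.range k) fun i _ =>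
      hg.comp (measurable_id.prodMk ((measurable_pi_apply i).comp henum))
  convert hsum.comp (measurable_id.prodMk (measurable_ncard_setOf_rel hF hFm hfin)) using 1
  funext x
  exact tsum_image_Iio_eq_sum (hspec x).1 (hspec x).2 (g x)

theorem exists_measurable_selector (hF : Equivalence F)
    (hFm : MeasurableSet {p : X × X | F p.1 p.2}) (hfin : ∀ x, {y | F y x}.Finite) :
    ∃ σ : X → X, Measurable σ ∧ (∀ x, F (σ x) x) ∧ ∀ x y, F x y → σ x = σ y := by
  obtain ⟨enum, henum, hspec, hinv⟩ := exists_measurable_classEnum hF hFm hfin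
  refine ⟨fun x => enum x 0, (measurable_pi_apply 0).comp henum, fun x => ?_,
    fun x y hxy => congrFun (hinv x y hxy) 0⟩
  have h0 := mem_image_of_mem (enum x) (mem_Iio.2 ((ncard_pos (hfin x)).2 ⟨x, hF.refl x⟩))
  rwa [(hspec x).2] at h0

theorem exists_measurable_injective_on_classes (hF : Equivalence F)
    (hFm : MeasurableSet {p : X × X | F p.1 p.2}) (hfin : ∀ x, {y | F y x}.Finite) :
    ∃ d : X → ℕ, Measurable d ∧ ∀ x y, F x y → d x = d y → x = y := by
  classical
  obtain ⟨enum, henum, hspec, hinv⟩ := exists_measurable_classEnum hF hFm hfin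
  have hex : ∀ x, ∃ i, enum x i = x := fun x => by
    have hx : x ∈ enum x '' Iio {y | F y x}.ncard := (hspec x).2.symm ▸ hF.refl x
    obtain ⟨i, -, hi⟩ := hx
    exact ⟨i, hi⟩
  refine ⟨fun x => Nat.find (hex x), measurable_find hex fun i =>
    measurableSet_eq_fun ((measurable_pi_apply i).comp henum) measurable_id, fun x y hxy hd => ?_⟩
  replace hd : Nat.find (hex x) = Nat.find (hex y) := hd
  calc x = enum x (Nat.find (hex x)) := (Nat.find_spec (hex x)).symm
    _ = enum y (Nat.find (hex y)) := by rw [← hd]; exact congrFun (hinv x y hxy) _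
    _ = y := Nat.find_spec (hex y)

end FiniteEquivalence

section Scales

open Filter Topology

theorem exists_Ioo_mul_subset {U : Set ℝ} (hU : U ∈ 𝓝 (1 : ℝ)) :
    ∃ q, 1 < q ∧ ∀ a ∈ Ioo q⁻¹ q, ∀ b ∈ Ioo q⁻¹ q, a * b ∈ U := by
  obtain ⟨l, u, ⟨hl, hu⟩, hsub⟩ := mem_nhds_iff_exists_Ioo_subset.1 hU
  have hupper : ∀ᶠ q in 𝓝 (1 : ℝ), q * q < u := by
    have : Tendsto (fun q : ℝ => q * q) (𝓝 1) (𝓝 1) := by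
      simpa using (tendsto_id (x := 𝓝 (1 : ℝ))).mul (tendsto_id (x := 𝓝 (1 : ℝ)))
    exact this.eventually (gt_mem_nhds hu)
  have hlower : ∀ᶠ q in 𝓝 (1 : ℝ), l < q⁻¹ * q⁻¹ := by
    have : Tendsto (fun q : ℝ => q⁻¹ * q⁻¹) (𝓝 1) (𝓝 1) := by
      simpa using (tendsto_inv₀ one_ne_zero).mul (tendsto_inv₀ (one_ne_zero (α := ℝ)))
    exact this.eventually (lt_mem_nhds hl)
  obtain ⟨q, ⟨hqu, hql⟩, hq⟩ :=
    (((hupper.and hlower).filter_mono nhdsWithin_le_nhds).and self_mem_nhdsWithin).exists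
      (f := 𝓝[>] (1 : ℝ))
  have hq0 : 0 < q⁻¹ := inv_pos.2 (zero_lt_one.trans hq)
  refine ⟨q, hq, fun a ha b hb => hsub ⟨?_, ?_⟩⟩
  · exact hql.trans (mul_lt_mul'' ha.1 hb.1 hq0.le hq0.le)
  · exact (mul_lt_mul'' ha.2 hb.2 (hq0.trans ha.1).le (hq0.trans hb.1).le).trans hqu

theorem exists_measurable_int_fibers_ratio_mem_Ioo {q : ℝ} (hq : 1 < q) :
    ∃ κ : ℝ → ℤ, Measurable κ ∧
      ∀ s t, 0 < s → 0 < t → κ s = κ t → s / t ∈ Ioo q⁻¹ q := by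
  refine ⟨fun s => ⌊Real.log s / Real.log q⌋, (Real.measurable_log.div_const _).floor,
    fun s t hs ht hst => ?_⟩
  have hlogq := Real.log_pos hq
  have hr : 0 < s / t := div_pos hs ht
  have h := Int.abs_sub_lt_one_of_floor_eq_floor hst
  rw [← sub_div, abs_div, abs_of_pos hlogq, div_lt_one hlogq, abs_lt,
    ← Real.log_div hs.ne' ht.ne'] at h
  constructor
  · rw [← Real.log_lt_log_iff (inv_pos.2 (zero_lt_one.trans hq)) hr, Real.log_inv]
    exact h.1
  · rw [← Real.log_lt_log_iff hr (zero_lt_one.trans hq)]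
    exact h.2

end Scales

section Cocycle

variable [MeasurableSpace X] {E : X → X → Prop} {ρ : X → X → ℝ}

theorem IsCocycle.rSize_eq_mul (hρ : IsCocycle E ρ) {A : Set X} {w y : X}
    (hA : ∀ z ∈ A, E z w) (hwy : E w y) : rSize ρ A y = rSize ρ A w * ρ w y := by
  rw [rSize, rSize, ← tsum_mul_right]
  exact tsum_congr fun z => hρ.2.2 (hA z z.2) hwy

theorem IsCocycle.rSize_pos (hρ : IsCocycle E ρ) {A : Set X} {w y : X} (hfin : A.Finite)
    (hA : ∀ z ∈ A, E z y) (hw : w ∈ A) : 0 < rSize ρ A y :=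
  (hfin.summable (ρ · y)).tsum_pos (fun z => (hρ.2.1 (hA z z.2)).le) ⟨w, hw⟩
    (hρ.2.1 (hA w hw))

theorem IsCocycle.rSize_div_rSize (hE : Equivalence E) (hρ : IsCocycle E ρ) {A B : Set X}
    {a b y : X} (hA : ∀ z ∈ A, E z a) (hB : ∀ z ∈ B, E z b) (hay : E a y) (hby : E b y)
    (hBpos : 0 < rSize ρ B b) :
    rSize ρ A y / rSize ρ B y = rSize ρ A a / rSize ρ B b * ρ a b := by
  rw [hρ.rSize_eq_mul hA hay, hρ.rSize_eq_mul hB hby, hρ.2.2 (hE.trans hay (hE.symm hby)) hby]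
  have := hρ.2.1 hby
  field_simp

end Cocycle

section Quotient

variable [MeasurableSpace X] {E F : X → X → Prop} {ρ : X → X → ℝ}

/-- Smoothness of `ρ / F`, read through representatives:
`(ρ / F)([x]_F, [y]_F) = |[x]_F|^y_ρ / |[y]_F|^y_ρ`. -/
def QuotientSmooth (E F : X → X → Prop) (hF : Equivalence F) (ρ : X → X → ℝ) : Prop :=
  ∃ U : Set ℝ, IsOpen U ∧ (1 : ℝ) ∈ U ∧ U ⊆ Set.Ioi 0 ∧
    ∃ c : Quotient (Setoid.mk F hF) → ℕ, Measurable c ∧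
      ∀ x y : X, ¬ F x y → E x y →
        rSize ρ {z | F z x} y / rSize ρ {z | F z y} y ∈ U →
        c (Quotient.mk (Setoid.mk F hF) x) ≠ c (Quotient.mk (Setoid.mk F hF) y)

theorem IsFinSubequiv.finite_setOf_rel (hF : IsFinSubequiv E F) (x : X) : {y | F y x}.Finite :=
  (hF.2.2.2 x).subset fun _ hy => hF.1.symm hy

theorem Ioo_inv_subset_Ioi {q : ℝ} (hq : 1 < q) : Ioo q⁻¹ q ⊆ Ioi 0 :=
  fun _ hr => (inv_pos.2 (zero_lt_one.trans hq)).trans hr.1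

variable [StandardBorelSpace X]

theorem quotientSmooth_of_smooth (hE : Equivalence E) (hρ : IsCocycle E ρ)
    (hF : Equivalence F) (hFsub : IsFinSubequiv E F) (h : Smooth E ρ) :
    QuotientSmooth E F hF ρ := by
  obtain ⟨U, hUo, hU1, -, c, hc, hcol⟩ := h
  obtain ⟨q, hq, hmul⟩ := exists_Ioo_mul_subset (hUo.mem_nhds hU1)
  obtain ⟨κ, hκ, hκratio⟩ := exists_measurable_int_fibers_ratio_mem_Ioo hq
  have hfin := hFsub.finite_setOf_rel
  obtain ⟨-, hFm, hFE, -⟩ := hFsub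
  obtain ⟨σ, hσ, hσF, hσinv⟩ := exists_measurable_selector hF hFm hfin
  have hσE : ∀ x, ∀ z ∈ {z | F z x}, E z (σ x) := fun x z hz =>
    hFE (hF.trans hz (hF.symm (hσF x)))
  let T : X → ℝ := fun x => rSize ρ {z | F z x} (σ x)
  have hT : Measurable T := measurable_tsum_setOf_rel hF hFm hfin (g := fun x z => ρ z (σ x))
    (hρ.1.comp (measurable_snd.prodMk (hσ.comp measurable_fst)))
  have hTpos : ∀ x, 0 < T x := fun x => hρ.rSize_pos (hfin x) (hσE x) (hσF x)
  let col : X → ℕ := fun x => Encodable.encode (c (σ x), κ (T x))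
  have hcol_inv : ∀ x y, F x y → col x = col y := fun x y hxy => by
    simp only [col, T, hσinv x y hxy, setOf_rel_eq_of_rel hF hxy]
  refine ⟨Ioo q⁻¹ q, isOpen_Ioo, ⟨inv_lt_one_of_one_lt₀ hq, hq⟩, Ioo_inv_subset_Ioi hq,
    Quotient.lift col hcol_inv, measurable_from_quotient.2 ?_, fun x y hFxy hExy hr heq => ?_⟩
  · exact (measurable_of_countable (Encodable.encode : ℕ × ℤ → ℕ)).comp
      ((hc.comp hσ).prodMk (hκ.comp hT))
  obtain ⟨hcσ, hκT⟩ := Prod.mk.inj (Encodable.encode_injective heq)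
  have hσxy : E (σ x) y := hE.trans (hFE (hσF x)) hExy
  have hσyy : E (σ y) y := hFE (hσF y)
  have hρσ :
      ρ (σ x) (σ y) = rSize ρ {z | F z x} y / rSize ρ {z | F z y} y * (T y / T x) := by
    rw [hρ.rSize_div_rSize hE (hσE x) (hσE y) hσxy hσyy (hTpos y)]
    change _ = T x / T y * ρ (σ x) (σ y) * (T y / T x)
    have hx : T x ≠ 0 := (hTpos x).ne'
    have hy : T y ≠ 0 := (hTpos y).ne'
    field_simp
  refine hcol (mem_univ _) (mem_univ _) (fun h => hFxy ?_) (hE.trans hσxy (hE.symm hσyy)) ?_ hcσ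
  · exact hF.trans (hF.symm (hσF x)) (h ▸ hσF y)
  · exact hρσ ▸ hmul _ hr _ (hκratio _ _ (hTpos y) (hTpos x) hκT.symm)

theorem smooth_of_quotientSmooth (hE : Equivalence E) (hρ : IsCocycle E ρ)
    (hF : Equivalence F) (hFsub : IsFinSubequiv E F) (h : QuotientSmooth E F hF ρ) :
    Smooth E ρ := by
  obtain ⟨U, hUo, hU1, -, c, hc, hcol⟩ := h
  obtain ⟨q, hq, hmul⟩ := exists_Ioo_mul_subset (hUo.mem_nhds hU1)
  obtain ⟨κ, hκ, hκratio⟩ := exists_measurable_int_fibers_ratio_mem_Ioo hq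
  have hfin := hFsub.finite_setOf_rel
  obtain ⟨-, hFm, hFE, -⟩ := hFsub
  obtain ⟨d, hd, hdinj⟩ := exists_measurable_injective_on_classes hF hFm hfin
  have hclsE : ∀ x, ∀ z ∈ {z | F z x}, E z x := fun _ _ hz => hFE hz
  let S : X → ℝ := fun x => rSize ρ {z | F z x} x
  have hS : Measurable S :=
    measurable_tsum_setOf_rel hF hFm hfin (g := fun x z => ρ z x) (hρ.1.comp measurable_swap)
  have hSpos : ∀ x, 0 < S x := fun x => hρ.rSize_pos (hfin x) (hclsE x) (hF.refl x)
  refine ⟨Ioo q⁻¹ q, isOpen_Ioo, ⟨inv_lt_one_of_one_lt₀ hq, hq⟩, Ioo_inv_subset_Ioi hq,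
    fun x => Encodable.encode (c (Quotient.mk _ x), d x, κ (S x)), ?_, ?_⟩
  · exact (measurable_of_countable _).comp
      ((measurable_from_quotient.1 hc).prodMk (hd.prodMk (hκ.comp hS)))
  rintro x y - - hne hExy hρxy heq
  obtain ⟨hcxy, hdxy, hκS⟩ : c (Quotient.mk _ x) = c (Quotient.mk _ y) ∧ d x = d y ∧
      κ (S x) = κ (S y) := by simpa using Encodable.encode_injective heq
  by_cases hFxy : F x y
  · exact hne (hdinj x y hFxy hdxy)
  refine hcol x y hFxy hExy ?_ hcxy
  rw [hρ.rSize_div_rSize hE (hclsE x) (hclsE y) hExy (hE.refl y) (hSpos y), mul_comm]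
  exact hmul _ hρxy _ (hκratio _ _ (hSpos x) (hSpos y) hκS)

end Quotient

/-- `ρ` is smooth iff the quotient cocycle `ρ / F` is smooth, for any finite Borel
subequivalence relation `F` of `E`. -/
theorem stmt11 [MeasurableSpace X] [StandardBorelSpace X]
    (E : X → X → Prop) (hE : IsCBER E)
    (ρ : X → X → ℝ) (hρ : IsCocycle E ρ)
    (F : X → X → Prop) (hF : Equivalence F) (hFsub : IsFinSubequiv E F) :
    Smooth E ρ ↔
      (∃ U : Set ℝ, IsOpen U ∧ (1 : ℝ) ∈ U ∧ U ⊆ Set.Ioi 0 ∧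
        ∃ c : Quotient (Setoid.mk F hF) → ℕ, Measurable c ∧
          ∀ x y : X, ¬ F x y → E x y →
            rSize ρ {z | F z x} y / rSize ρ {z | F z y} y ∈ U →
            c (Quotient.mk (Setoid.mk F hF) x) ≠ c (Quotient.mk (Setoid.mk F hF) y)) :=
  ⟨quotientSmooth_of_smooth hE.1 hρ hF hFsub, smooth_of_quotientSmooth hE.1 hρ hF hFsub⟩

end CocycleNadkarni
end
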